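/- Let G be a finite connected simple graph on vertex set V with nonnegative edge weights, let T be a spanning tree of G rooted at r, let X with ∅ ≠ X ⊊ V be such that exactly one edge of T has exactly one endpoint in X, and let v be the endpoint of that tree edge that is the child of the other endpoint. Then X = v↓ or X = V ∖ v↓, and in either case cut(X) = cut(v↓). -/

import Mathlib

/-! Walking along `T`, membership in `X` can only change across the tree edge `s(p, v)`.
A descendant `u` of `v` is joined to `v` by the tail of the root path through `v`, which
avoids `p`, and a non-descendant `u` is joined to `r` by a path avoiding `v`. Hence `X` agrees
with `v↓` or with its complement, according to whether `v ∈ X`, and the cut of a set equals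
the cut of its complement. -/

open Finset
open scoped Classical

noncomputable section

variable {V : Type*} [Fintype V] [DecidableEq V]

/-- `Desc T r v u` : `u` is a descendant of `v` in the tree `T` rooted at `r`,
i.e. `v` lies on the unique path in `T` from `r` to `u` (includes `u = v`). -/
def Desc (T : SimpleGraph V) (r v u : V) : Prop :=
  ∀ p : T.Walk r u, p.IsPath → v ∈ p.support

/-- `descSet T r v` is `v↓`, the set of descendants of `v` in `T` rooted at `r`. -/
def descSet (T : SimpleGraph V) (r v : V) : Set V := {u | Desc T r v u}

/-- `IsLCA T r z x y` : `z` is the least common ancestor of `x` and `y` in `T`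
rooted at `r`: `z` is a common ancestor of maximal depth (distance from `r`). -/
def IsLCA (T : SimpleGraph V) (r z x y : V) : Prop :=
  Desc T r z x ∧ Desc T r z y ∧
    ∀ u, Desc T r u x → Desc T r u y → T.dist r u ≤ T.dist r z

/-- `cutw G w S` : total weight of edges of `G` with exactly one endpoint in `S`
(each such edge `{x,y}` with `x ∈ S`, `y ∉ S` is counted once, as the ordered
pair `(x, y)`). -/
def cutw (G : SimpleGraph V) (w : V → V → ℝ) (S : Set V) : ℝ :=
  ∑ x, ∑ y, if x ∈ S ∧ y ∉ S ∧ G.Adj x y then w x y else 0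

/-- `degw G w v` : the weighted degree `δ(v)` of `v` in `G`. -/
def degw (G : SimpleGraph V) (w : V → V → ℝ) (v : V) : ℝ :=
  ∑ u, if G.Adj u v then w u v else 0

/-- `rhoLCA G T w r v` : `ρ(v)`, the total weight of edges of `G` whose
endpoints' least common ancestor in `T` (rooted at `r`) is `v`.  Each edge is
counted as two ordered pairs, whence the division by `2`. -/
def rhoLCA (G T : SimpleGraph V) (w : V → V → ℝ) (r v : V) : ℝ :=
  (∑ x, ∑ y, if G.Adj x y ∧ IsLCA T r v x y then w x y else 0) / 2

/-- `degDown G T w r v` : `δ↓(v) = Σ_{u ∈ v↓} δ(u)`. -/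
def degDown (G T : SimpleGraph V) (w : V → V → ℝ) (r v : V) : ℝ :=
  ∑ u, if Desc T r v u then degw G w u else 0

/-- `rhoDown G T w r v` : `ρ↓(v) = Σ_{u ∈ v↓} ρ(u)`. -/
def rhoDown (G T : SimpleGraph V) (w : V → V → ℝ) (r v : V) : ℝ :=
  ∑ u, if Desc T r v u then rhoLCA G T w r u else 0

namespace SimpleGraph.Walk

variable {α : Type*} {G : SimpleGraph α}

lemma mem_iff_mem_of_notMem_edges {X : Set α} {e : Sym2 α}
    (hX : ∀ a b, G.Adj a b → a ∈ X → b ∉ X → s(a, b) = e)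
    {a b : α} (q : G.Walk a b) (hq : e ∉ q.edges) : a ∈ X ↔ b ∈ X := by
  induction q with
  | nil => exact Iff.rfl
  | @cons a c b hac q ih =>
    rw [edges_cons, List.mem_cons, not_or] at hq
    have hstep : a ∈ X ↔ c ∈ X := by
      constructor
      · exact fun ha => by_contra fun hc => hq.1 (hX a c hac ha hc).symm
      · exact fun hc => by_contra fun ha => hq.1 (Sym2.eq_swap.trans (hX c a hac.symm hc ha)).symm
    exact hstep.trans (ih hq.2)

lemma IsPath.notMem_support_dropUntil [DecidableEq α] {u v w x : α} {q : G.Walk u v}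
    (hq : q.IsPath) (hw : w ∈ q.support) (hx : x ∈ (q.takeUntil w hw).support) (hxw : x ≠ w) :
    x ∉ (q.dropUntil w hw).support := by
  intro hx'
  have hnd := hq.support_nodup
  rw [← q.take_spec hw, support_append] at hnd
  rw [← cons_tail_support, List.mem_cons] at hx'
  exact List.disjoint_of_nodup_append hnd hx (hx'.resolve_left hxw)

end SimpleGraph.Walk

open SimpleGraph Walk

section Descendants

variable {α : Type*} {T : SimpleGraph α} {r p v : α}

lemma not_desc_of_desc (hT : T.Preconnected) (hchild : Desc T r p v) (hpv : p ≠ v) :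
    ¬ Desc T r v p := by
  intro hvp
  obtain ⟨q, hq⟩ := (hT r v).exists_isPath
  have hp := hchild q hq
  exact endpoint_notMem_support_takeUntil hq hp hpv.symm (hvp _ (hq.takeUntil hp))

variable {X : Set α} (hX : ∀ a b, T.Adj a b → a ∈ X → b ∉ X → s(a, b) = s(p, v))
include hX

lemma mem_iff_of_desc (hT : T.Preconnected) (hchild : Desc T r p v) (hpv : p ≠ v)
    {u : α} (hu : Desc T r v u) : u ∈ X ↔ v ∈ X := by
  obtain ⟨q, hq⟩ := (hT r u).exists_isPath
  have hv := hu q hq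
  have hp : p ∉ (q.dropUntil v hv).support :=
    hq.notMem_support_dropUntil hv (hchild _ (hq.takeUntil hv)) hpv
  exact (mem_iff_mem_of_notMem_edges hX (q.dropUntil v hv)
    fun he => hp (fst_mem_support_of_mem_edges _ he)).symm

lemma mem_iff_of_not_desc {u : α} (hu : ¬ Desc T r v u) : u ∈ X ↔ r ∈ X := by
  simp only [Desc, not_forall] at hu
  obtain ⟨q, -, hv⟩ := hu
  exact (mem_iff_mem_of_notMem_edges hX q fun he => hv (snd_mem_support_of_mem_edges _ he)).symm

lemma mem_iff_desc_iff (hT : T.Preconnected) (hchild : Desc T r p v) (hpv : p ≠ v)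
    (hcross : p ∈ X ↔ v ∉ X) (u : α) : u ∈ X ↔ (Desc T r v u ↔ v ∈ X) := by
  have hr : r ∈ X ↔ v ∉ X :=
    (mem_iff_of_not_desc hX (not_desc_of_desc hT hchild hpv)).symm.trans hcross
  by_cases hu : Desc T r v u
  · simp only [hu, true_iff, mem_iff_of_desc hX hT hchild hpv hu]
  · simp only [hu, false_iff, mem_iff_of_not_desc hX hu, hr]

lemma eq_descSet_or_eq_compl (hT : T.Preconnected) (hchild : Desc T r p v) (hpv : p ≠ v)
    (hcross : p ∈ X ↔ v ∉ X) : X = descSet T r v ∨ X = (descSet T r v)ᶜ := by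
  have hmem := mem_iff_desc_iff hX hT hchild hpv hcross
  by_cases hv : v ∈ X
  · exact Or.inl (Set.ext fun u => by simp only [hmem u, hv, iff_true, descSet, Set.mem_ofPred_eq])
  · exact Or.inr (Set.ext fun u => by
      simp only [hmem u, hv, iff_false, descSet, Set.mem_compl_iff, Set.mem_ofPred_eq])

end Descendants

section Cuts

variable {α : Type*} [Fintype α]

lemma cutw_compl (G : SimpleGraph α) (w : α → α → ℝ) (hsym : ∀ x y, w x y = w y x)
    (S : Set α) : cutw G w Sᶜ = cutw G w S := by
  unfold cutw
  rw [Finset.sum_comm]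
  refine Finset.sum_congr rfl fun x _ => Finset.sum_congr rfl fun y _ => ?_
  have hiff : (y ∈ Sᶜ ∧ x ∉ Sᶜ ∧ G.Adj y x) ↔ (x ∈ S ∧ y ∉ S ∧ G.Adj x y) := by
    simp only [Set.mem_compl_iff, not_not, G.adj_comm y x]
    tauto
  simp only [hsym y x, hiff]

lemma sym2_eq_of_card_crossing_eq_one {T : SimpleGraph α} {X : Set α}
    (hone : (Finset.univ.filter
      (fun q : α × α => T.Adj q.1 q.2 ∧ q.1 ∈ X ∧ q.2 ∉ X)).card = 1)
    {p v : α} (hadj : T.Adj p v) (hcross : (p ∈ X ∧ v ∉ X) ∨ (v ∈ X ∧ p ∉ X))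
    (a b : α) (hab : T.Adj a b) (ha : a ∈ X) (hb : b ∉ X) : s(a, b) = s(p, v) := by
  have hcard := Finset.card_le_one.mp hone.le (a, b) (by simp [hab, ha, hb])
  rcases hcross with ⟨hp, hv⟩ | ⟨hv, hp⟩
  · simp [hcard (p, v) (by simp [hadj, hp, hv])]
  · simp [hcard (v, p) (by simp [hadj.symm, hp, hv])]

end Cuts

theorem stmt13_general (G T : SimpleGraph V)
    (hT : T.IsTree)
    (w : V → V → ℝ) (hsym : ∀ x y, w x y = w y x)
    (r : V) (X : Set V)
    (hone : (Finset.univ.filter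
      (fun q : V × V => T.Adj q.1 q.2 ∧ q.1 ∈ X ∧ q.2 ∉ X)).card = 1)
    (p v : V) (hadj : T.Adj p v) (hchild : Desc T r p v)
    (hcross : (p ∈ X ∧ v ∉ X) ∨ (v ∈ X ∧ p ∉ X)) :
    (X = descSet T r v ∨ X = (descSet T r v)ᶜ) ∧
      cutw G w X = cutw G w (descSet T r v) := by
  have hcrossing := sym2_eq_of_card_crossing_eq_one hone hadj hcross
  have hXdesc :=
    eq_descSet_or_eq_compl hcrossing hT.connected.preconnected hchild hadj.ne (by tauto)
  refine ⟨hXdesc, ?_⟩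
  rcases hXdesc with rfl | rfl
  · rfl
  · exact cutw_compl G w hsym _

/-- if `X` (nonempty, proper) is such that exactly one edge
of the spanning tree `T` has exactly one endpoint in `X` (counted here as
exactly one ordered pair `(a, b)` with `T.Adj a b`, `a ∈ X`, `b ∉ X`), that
edge joins `p` and `v` with `v` the child of `p`, then `X = v↓` or
`X = V ∖ v↓`, and in either case `cut(X) = cut(v↓)`. -/
theorem stmt13 (G T : SimpleGraph V) (hG : G.Connected)
    (hT : T.IsTree) (hTG : T ≤ G)
    (w : V → V → ℝ) (hsym : ∀ x y, w x y = w y x) (hnn : ∀ x y, 0 ≤ w x y)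
    (r : V) (X : Set V) (hXne : X ≠ ∅) (hXuniv : X ≠ Set.univ)
    (hone : (Finset.univ.filter
      (fun q : V × V => T.Adj q.1 q.2 ∧ q.1 ∈ X ∧ q.2 ∉ X)).card = 1)
    (p v : V) (hadj : T.Adj p v) (hchild : Desc T r p v)
    (hcross : (p ∈ X ∧ v ∉ X) ∨ (v ∈ X ∧ p ∉ X)) :
    (X = descSet T r v ∨ X = (descSet T r v)ᶜ) ∧
      cutw G w X = cutw G w (descSet T r v) :=
  stmt13_general G T hT w hsym r X hone p v hadj hchild hcross

end
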